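/- arXiv:1301.1999 — 5 statements merged into one kernel-verified Lean document; each statement's English description precedes it below -/
import Mathlib

section
/- There exists an absolute constant c > 0 such that the following holds. For every finite simple undirected unweighted graph G = (V, E) on n vertices and every subset S ⊆ V, there exists a spanning subgraph H of G with at most c · n · √|S| edges such that for every pair of vertices u, v ∈ S lying in the same connected component of G, the distance in H satisfies δ_H(u, v) ≤ δ_G(u, v) + 2. -/
/-!
Path buying with a potential. Put `b = ⌊√|S|⌋` and take a maximal family of disjoint stars of
`G` with more than `b` leaves each; the leaf sets are the clusters. Start from the star edges (at
most `n`) and all edges at unclustered vertices (at most `n b`: by maximality no vertex has more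
than `b` unclustered neighbours). Then, for every pair `u, v ∈ S` not yet within `+2`, add a
shortest `u`–`v` path. Its new edges have both ends clustered, and a shortest path meets a cluster
in at most three vertices, so it costs at most three edges per cluster it meets. For such a
cluster with centre `c`, going through `c` is a `+2` route afterwards but was not before, so the
capped excess `min 3 (d_H(s, c) - d_G(s, c))` summed over `s ∈ {u, v}` drops by at least one.
The potential summed over `S ×` clusters is at most `3 |S| n / (b + 1) ≤ 3 n (b + 1)`, which
bounds the total number of added edges by `O(n √|S|)`.
-/

open Finset

lemma Finset.add_sum_le_sum_of_pair {ι : Type*} [DecidableEq ι] {s : Finset ι}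
    {f g : ι → ℕ} {a : ℕ} {i j : ι} (hi : i ∈ s) (hj : j ∈ s) (hij : i ≠ j)
    (hfg : ∀ k ∈ s, f k ≤ g k)
    (h : a + (f i + f j) ≤ g i + g j) : a + ∑ k ∈ s, f k ≤ ∑ k ∈ s, g k := by
  have hj' : j ∈ s.erase i := mem_erase.2 ⟨hij.symm, hj⟩
  rw [← add_sum_erase s f hi, ← add_sum_erase s g hi, ← add_sum_erase _ f hj',
    ← add_sum_erase _ g hj']
  have := sum_le_sum (s := (s.erase i).erase j) fun k hk =>
    hfg k (mem_of_mem_erase (mem_of_mem_erase hk))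
  omega

namespace SimpleGraph

variable {V : Type*} {G H H' : SimpleGraph V} {u v x c s : V}

def DistWithinTwo (G H : SimpleGraph V) (u v : V) : Prop :=
  H.Reachable u v ∧ H.dist u v ≤ G.dist u v + 2

lemma distWithinTwo_self : G.DistWithinTwo H u u := ⟨.refl u, by simp⟩

lemma DistWithinTwo.mono (h : G.DistWithinTwo H u v) (hHH' : H ≤ H') : G.DistWithinTwo H' u v :=
  ⟨h.1.mono hHH', (h.1.dist_anti hHH').trans h.2⟩

namespace Walk

lemma dist_getVert_of_length_eq_dist {w : G.Walk u v} (hw : w.length = G.dist u v) {i : ℕ}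
    (hi : i ≤ w.length) : G.dist u (w.getVert i) = i := by
  have h := length_eq_dist_of_subwalk hw (w.isSubwalk_take i)
  rwa [take_length, min_eq_left hi, eq_comm] at h

lemma card_le_three_of_length_eq_dist [DecidableEq V] {w : G.Walk u v}
    (hw : w.length = G.dist u v) {X : Finset V} (hXw : ∀ x ∈ X, x ∈ w.support)
    (hX : ∀ x ∈ X, ∀ y ∈ X, G.dist x y ≤ 2) : #X ≤ 3 := by
  obtain rfl | hne := X.eq_empty_or_nonempty
  · simp
  obtain ⟨x₀, hx₀, hmin⟩ := exists_min_image X (G.dist u) hne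
  -- on a shortest walk, a vertex is recovered from its distance to `u`
  have hinj : Set.InjOn (G.dist u) X := by
    intro x hx y hy hxy
    obtain ⟨i, rfl, hi⟩ := mem_support_iff_exists_getVert.1 (hXw x hx)
    obtain ⟨j, rfl, hj⟩ := mem_support_iff_exists_getVert.1 (hXw y hy)
    simp only [dist_getVert_of_length_eq_dist hw hi, dist_getVert_of_length_eq_dist hw hj] at hxy
    rw [hxy]
  have hreach : G.Reachable u x₀ := (w.takeUntil x₀ (hXw x₀ hx₀)).reachable
  have himage : X.image (G.dist u) ⊆ Icc (G.dist u x₀) (G.dist u x₀ + 2) := by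
    simp only [subset_iff, mem_image, mem_Icc, forall_exists_index, and_imp]
    rintro _ y hy rfl
    exact ⟨hmin y hy, (hreach.dist_triangle_left y).trans (by grw [hX x₀ hx₀ y hy])⟩
  calc #X = #(X.image (G.dist u)) := (card_image_of_injOn hinj).symm
    _ ≤ #(Icc (G.dist u x₀) (G.dist u x₀ + 2)) := card_le_card himage
    _ = 3 := by simp only [Nat.card_Icc]; omega

lemma dist_add_dist_le_of_adj (w : G.Walk u v) (hx : x ∈ w.support) (hxc : G.Adj x c) :
    G.dist u c + G.dist c v ≤ w.length + 2 := by
  classical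
  have h₁ := dist_le ((w.takeUntil x hx).concat hxc)
  have h₂ := dist_le ((w.dropUntil x hx).cons hxc.symm)
  have h := congrArg length (w.take_spec hx)
  simp only [length_concat, length_cons, length_append] at h₁ h₂ h
  omega

end Walk

open scoped Classical in
noncomputable def cappedExcess (G H : SimpleGraph V) (s c : V) : ℕ :=
  if H.Reachable s c then min 3 (H.dist s c - G.dist s c) else 3

lemma cappedExcess_le_three : cappedExcess G H s c ≤ 3 := by
  unfold cappedExcess
  split_ifs <;> omega

lemma cappedExcess_anti (hHH' : H ≤ H') : cappedExcess G H' s c ≤ cappedExcess G H s c := by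
  unfold cappedExcess
  by_cases h : H.Reachable s c
  · have := h.dist_anti hHH'
    rw [if_pos h, if_pos (h.mono hHH')]
    omega
  · rw [if_neg h]
    split_ifs <;> omega

-- Both new excesses are at most `2`; if neither old one is capped, their sum is at least
-- `d_H(u, v) - d_G(u, c) - d_G(v, c)`, and `d_H(u, v) > d_G(u, v) + 2 ≥ d_H'(u, c) + d_H'(c, v)`.
lemma cappedExcess_add_lt (hHH' : H ≤ H') (hH'G : H' ≤ G) (hfar : ¬G.DistWithinTwo H u v)
    (huc : H'.Reachable u c) (hcv : H'.Reachable c v)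
    (hc : H'.dist u c + H'.dist c v ≤ G.dist u v + 2) :
    cappedExcess G H' u c + cappedExcess G H' v c <
      cappedExcess G H u c + cappedExcess G H v c := by
  have hanti_u := cappedExcess_anti (G := G) (s := u) (c := c) hHH'
  have hanti_v := cappedExcess_anti (G := G) (s := v) (c := c) hHH'
  have hGu := huc.dist_anti hH'G
  have hGv := hcv.symm.dist_anti hH'G
  have htri := (huc.mono hH'G).dist_triangle_left v
  rw [dist_comm (u := c)] at htri hc
  simp only [cappedExcess, if_pos huc, if_pos hcv.symm] at hanti_u hanti_v ⊢
  by_cases hHu : H.Reachable u c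
  · by_cases hHv : H.Reachable v c
    · simp only [if_pos hHu, if_pos hHv] at hanti_u hanti_v ⊢
      have hHtri := hHu.dist_triangle_left v
      rw [dist_comm (u := c)] at hHtri
      have hfar' : G.dist u v + 2 < H.dist u v := by
        by_contra! h
        exact hfar ⟨hHu.trans hHv.symm, h⟩
      have := hHu.dist_anti hHH'
      have := hHv.dist_anti hHH'
      omega
    · simp only [if_neg hHv] at hanti_v ⊢
      omega
  · simp only [if_neg hHu] at hanti_u ⊢
    omega

lemma ncard_edgeSet_exists_notMem_le [Fintype V] {b : ℕ} (U : Set V)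
    (hsparse : ∀ y, (G.neighborSet y \ U).ncard ≤ b) :
    {e ∈ G.edgeSet | ∃ x ∈ e, x ∉ U}.ncard ≤ Fintype.card V * b := by
  have hsub :
      {e ∈ G.edgeSet | ∃ x ∈ e, x ∉ U} ⊆ ⋃ y, (s(y, ·)) '' (G.neighborSet y \ U) := by
    rintro e ⟨he, x, hxe, hxU⟩
    induction e using Sym2.ind with
    | h a b =>
      simp only [Set.mem_iUnion, Set.mem_image, Set.mem_sdiff, mem_neighborSet]
      rcases Sym2.mem_iff.1 hxe with rfl | rfl
      · exact ⟨b, x, ⟨(G.mem_edgeSet.1 he).symm, hxU⟩, Sym2.eq_swap⟩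
      · exact ⟨a, x, ⟨G.mem_edgeSet.1 he, hxU⟩, rfl⟩
  calc {e ∈ G.edgeSet | ∃ x ∈ e, x ∉ U}.ncard
      ≤ (⋃ y, (s(y, ·)) '' (G.neighborSet y \ U)).ncard := Set.ncard_le_ncard hsub
    _ ≤ ∑ y, ((s(y, ·)) '' (G.neighborSet y \ U)).ncard := Set.ncard_iUnion_le_of_fintype _
    _ ≤ ∑ _y : V, b :=
        sum_le_sum fun y _ => (Set.ncard_image_le (Set.toFinite _)).trans (hsparse y)
    _ = Fintype.card V * b := by simp

structure IsStarPacking (G : SimpleGraph V) (b : ℕ) (F : Finset (V × Finset V)) : Prop where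
  adj : ∀ p ∈ F, ∀ x ∈ p.2, G.Adj p.1 x
  lt_card : ∀ p ∈ F, b < #p.2
  pairwiseDisjoint : (F : Set (V × Finset V)).PairwiseDisjoint Prod.snd

section StarPacking

variable [DecidableEq V] {b : ℕ} {F : Finset (V × Finset V)}

lemma IsStarPacking.card_mul_le [Fintype V] (hF : G.IsStarPacking b F) :
    #F * (b + 1) ≤ Fintype.card V :=
  calc #F * (b + 1) ≤ ∑ p ∈ F, #p.2 := by
        rw [← smul_eq_mul, ← sum_const]
        exact sum_le_sum hF.lt_card
    _ = #(F.biUnion Prod.snd) := (card_biUnion hF.pairwiseDisjoint).symm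
    _ ≤ Fintype.card V := card_le_univ _

lemma exists_isStarPacking_ncard_neighborSet_diff_le [Fintype V] (G : SimpleGraph V) (b : ℕ) :
    ∃ F, G.IsStarPacking b F ∧
      ∀ y, (G.neighborSet y \ ↑(F.biUnion Prod.snd)).ncard ≤ b := by
  classical
  obtain ⟨F, hF, hmax⟩ := exists_max_image {F | G.IsStarPacking b F} card
    ⟨∅, mem_filter.2 ⟨mem_univ _, ⟨by simp, by simp, by simp⟩⟩⟩
  replace hF := (mem_filter.1 hF).2
  refine ⟨F, hF, fun y => ?_⟩
  by_contra! hlarge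
  set U := F.biUnion Prod.snd
  set C : Finset V := {x | G.Adj y x ∧ x ∉ U}
  have hCU : Disjoint C U := Finset.disjoint_left.2 fun x hx => (mem_filter.1 hx).2.2
  have hC : b < #C := by
    have hcoe : (C : Set V) = G.neighborSet y \ ↑U := by
      ext
      simp [C]
    rwa [← Set.ncard_coe_finset, hcoe]
  have hnotin : (y, C) ∉ F := fun hyC => by
    obtain ⟨x, hx⟩ := card_pos.1 (b.zero_le.trans_lt hC)
    exact Finset.disjoint_left.1 hCU hx (mem_biUnion.2 ⟨_, hyC, hx⟩)
  have hpack : G.IsStarPacking b (insert (y, C) F) := by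
    refine ⟨?_, ?_, ?_⟩
    · simp only [mem_insert, forall_eq_or_imp]
      exact ⟨fun x hx => (mem_filter.1 hx).2.1, hF.adj⟩
    · simp only [mem_insert, forall_eq_or_imp]
      exact ⟨hC, hF.lt_card⟩
    · rw [coe_insert]
      refine hF.pairwiseDisjoint.insert fun q hq _ => hCU.mono_right ?_
      exact subset_biUnion_of_mem Prod.snd hq
  have := hmax _ (mem_filter.2 ⟨mem_univ _, hpack⟩)
  rw [card_insert_of_notMem hnotin] at this
  omega

def baseGraph (G : SimpleGraph V) (F : Finset (V × Finset V)) : SimpleGraph V :=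
  G ⊓ fromRel fun x y => x ∉ F.biUnion Prod.snd ∨ ∃ p ∈ F, p.1 = x ∧ y ∈ p.2

lemma baseGraph_le : baseGraph G F ≤ G := inf_le_left

lemma baseGraph_adj_of_notMem (h : G.Adj x y) (hy : y ∉ F.biUnion Prod.snd) :
    (baseGraph G F).Adj x y :=
  ⟨h, h.ne, Or.inr (Or.inl hy)⟩

lemma IsStarPacking.baseGraph_adj (hF : G.IsStarPacking b F) {p : V × Finset V} (hp : p ∈ F)
    (hx : x ∈ p.2) : (baseGraph G F).Adj p.1 x :=
  ⟨hF.adj p hp x hx, (hF.adj p hp x hx).ne, Or.inl (Or.inr ⟨p, hp, rfl, hx⟩)⟩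

lemma forall_mem_biUnion_of_notMem_edgeSet (hbase : baseGraph G F ≤ H) {e : Sym2 V}
    (he : e ∈ G.edgeSet) (heH : e ∉ H.edgeSet) : ∀ x ∈ e, x ∈ F.biUnion Prod.snd := by
  induction e using Sym2.ind with
  | h a b =>
    intro z hz
    by_contra hzU
    rcases Sym2.mem_iff.1 hz with rfl | rfl
    · exact heH (hbase (baseGraph_adj_of_notMem (G.mem_edgeSet.1 he).symm hzU)).symm
    · exact heH (hbase (baseGraph_adj_of_notMem (G.mem_edgeSet.1 he) hzU))

lemma IsStarPacking.ncard_edgeSet_baseGraph_le [Fintype V] (hF : G.IsStarPacking b F)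
    (hsparse : ∀ y, (G.neighborSet y \ ↑(F.biUnion Prod.snd)).ncard ≤ b) :
    (baseGraph G F).edgeSet.ncard ≤ Fintype.card V * b + Fintype.card V := by
  set U := F.biUnion Prod.snd
  set stars := F.biUnion fun p => p.2.image (s(p.1, ·))
  have hsub :
      (baseGraph G F).edgeSet ⊆ {e ∈ G.edgeSet | ∃ x ∈ e, x ∉ U} ∪ ↑stars := by
    intro e
    induction e using Sym2.ind with
    | h x y =>
      rintro ⟨hxy, -, (hx | ⟨p, hp, rfl, hy⟩) | (hy | ⟨p, hp, rfl, hx⟩)⟩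
      · exact Or.inl ⟨hxy, x, Sym2.mem_mk_left _ _, hx⟩
      · exact Or.inr (mem_biUnion.2 ⟨p, hp, mem_image_of_mem _ hy⟩)
      · exact Or.inl ⟨hxy, y, Sym2.mem_mk_right _ _, hy⟩
      · exact Or.inr (mem_biUnion.2 ⟨p, hp, mem_image.2 ⟨x, hx, Sym2.eq_swap⟩⟩)
  have hstars : #stars ≤ Fintype.card V :=
    calc #stars ≤ ∑ p ∈ F, #p.2 := card_biUnion_le.trans (sum_le_sum fun _ _ => card_image_le)
      _ = #U := (card_biUnion hF.pairwiseDisjoint).symm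
      _ ≤ Fintype.card V := card_le_univ _
  calc (baseGraph G F).edgeSet.ncard
      ≤ {e ∈ G.edgeSet | ∃ x ∈ e, x ∉ U}.ncard + (stars : Set (Sym2 V)).ncard :=
        (Set.ncard_le_ncard hsub).trans (Set.ncard_union_le _ _)
    _ ≤ Fintype.card V * b + Fintype.card V := by
        rw [Set.ncard_coe_finset]
        exact add_le_add (ncard_edgeSet_exists_notMem_le _ hsparse) hstars

end StarPacking

lemma Walk.IsPath.ncard_edges_inside_le [DecidableEq V] {w : G.Walk u v} (hw : w.IsPath)
    (U : Finset V) :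
    {e | e ∈ w.edges ∧ ∀ x ∈ e, x ∈ U}.ncard ≤ #(w.support.toFinset ∩ U) := by
  set I := {i ∈ range w.length | w.getVert (i + 1) ∈ U}
  have hsub : {e | e ∈ w.edges ∧ ∀ x ∈ e, x ∈ U} ⊆
      ↑(I.image fun i => s(w.getVert i, w.getVert (i + 1))) := by
    rintro e ⟨he, heU⟩
    induction e using Sym2.ind with
    | h a b =>
      obtain ⟨i, hi, hei⟩ := w.mk_mem_edges_iff_exists.1 he
      refine mem_image.2 ⟨i, mem_filter.2 ⟨mem_range.2 hi, heU _ ?_⟩, hei⟩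
      rw [← hei]
      exact Sym2.mem_mk_right _ _
  have hinj : Set.InjOn (fun i => w.getVert (i + 1)) I := fun i hi j hj hij => by
    have hi' := mem_range.1 (mem_filter.1 hi).1
    have hj' := mem_range.1 (mem_filter.1 hj).1
    have := hw.getVert_injOn (by simp only [Set.mem_ofPred_eq]; omega)
      (by simp only [Set.mem_ofPred_eq]; omega) hij
    omega
  calc {e | e ∈ w.edges ∧ ∀ x ∈ e, x ∈ U}.ncard
      ≤ #(I.image fun i => s(w.getVert i, w.getVert (i + 1))) := by
        rw [← Set.ncard_coe_finset]
        exact Set.ncard_le_ncard hsub (finite_toSet _)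
    _ ≤ #I := card_image_le
    _ = #(I.image fun i => w.getVert (i + 1)) := (card_image_of_injOn hinj).symm
    _ ≤ #(w.support.toFinset ∩ U) := card_le_card fun x hx => by
        obtain ⟨i, hi, rfl⟩ := mem_image.1 hx
        exact mem_inter.2 ⟨List.mem_toFinset.2 (w.getVert_mem_support _), (mem_filter.1 hi).2⟩

noncomputable def potential (G H : SimpleGraph V) (S : Finset V) (F : Finset (V × Finset V)) :
    ℕ :=
  ∑ s ∈ S, ∑ p ∈ F, cappedExcess G H s p.1

lemma potential_le (S : Finset V) (F : Finset (V × Finset V)) :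
    potential G H S F ≤ 3 * (#S * #F) :=
  calc potential G H S F ≤ ∑ _s ∈ S, ∑ _p ∈ F, 3 :=
        sum_le_sum fun _ _ => sum_le_sum fun _ _ => cappedExcess_le_three
    _ = 3 * (#S * #F) := by simp only [sum_const, smul_eq_mul]; ring

section PathBuying

variable [DecidableEq V] {b : ℕ} {S : Finset V} {F : Finset (V × Finset V)}

lemma ncard_edgeSet_sup_le_add_sum (hbase : baseGraph G F ≤ H) {w : G.Walk u v}
    (hw : w.IsPath) :
    (H ⊔ fromEdgeSet {e | e ∈ w.edges}).edgeSet.ncard ≤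
      H.edgeSet.ncard + ∑ p ∈ F, #(w.support.toFinset ∩ p.2) := by
  set P := fromEdgeSet {e | e ∈ w.edges}
  calc (H ⊔ P).edgeSet.ncard ≤ H.edgeSet.ncard + (P.edgeSet \ H.edgeSet).ncard := by
        rw [edgeSet_sup, ← Set.union_sdiff_self]
        exact Set.ncard_union_le _ _
    _ ≤ H.edgeSet.ncard +
          {e | e ∈ w.edges ∧ ∀ x ∈ e, x ∈ F.biUnion Prod.snd}.ncard := by
        gcongr
        · exact w.edges.finite_toSet.subset fun e he => he.1
        · rintro e ⟨he, heH⟩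
          have he' : e ∈ w.edges := (edgeSet_fromEdgeSet _ ▸ he).1
          exact ⟨he',
            forall_mem_biUnion_of_notMem_edgeSet hbase (w.edges_subset_edgeSet he') heH⟩
    _ ≤ H.edgeSet.ncard + #(w.support.toFinset ∩ F.biUnion Prod.snd) := by
        gcongr
        exact hw.ncard_edges_inside_le _
    _ ≤ H.edgeSet.ncard + ∑ p ∈ F, #(w.support.toFinset ∩ p.2) := by
        rw [inter_biUnion]
        gcongr
        exact card_biUnion_le

lemma IsStarPacking.card_inter_add_le (hF : G.IsStarPacking b F) (hbase : baseGraph G F ≤ H)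
    (hHH' : H ≤ H') (hH'G : H' ≤ G) (hfar : ¬G.DistWithinTwo H u v) {w : G.Walk u v}
    (hw : w.length = G.dist u v) (hwH' : ∀ e ∈ w.edges, e ∈ H'.edgeSet) {p : V × Finset V}
    (hp : p ∈ F) :
    #(w.support.toFinset ∩ p.2) + 3 * (cappedExcess G H' u p.1 + cappedExcess G H' v p.1) ≤
      3 * (cappedExcess G H u p.1 + cappedExcess G H v p.1) := by
  have hanti_u := cappedExcess_anti (G := G) (s := u) (c := p.1) hHH'
  have hanti_v := cappedExcess_anti (G := G) (s := v) (c := p.1) hHH'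
  obtain hempty | ⟨x, hx⟩ := (w.support.toFinset ∩ p.2).eq_empty_or_nonempty
  · rw [hempty, card_empty]
    omega
  obtain ⟨hxw, hxp⟩ := mem_inter.1 hx
  set w' := w.transfer H' hwH'
  have hxw' : x ∈ w'.support := by rwa [Walk.support_transfer, ← List.mem_toFinset]
  have hxc : H'.Adj x p.1 := hHH' (hbase (hF.baseGraph_adj hp hxp)).symm
  have huc : H'.Reachable u p.1 := (w'.takeUntil x hxw').reachable.trans hxc.reachable
  have hlt := cappedExcess_add_lt hHH' hH'G hfar huc (huc.symm.trans w'.reachable)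
    (by simpa [w', hw] using w'.dist_add_dist_le_of_adj hxw' hxc)
  have hcard : #(w.support.toFinset ∩ p.2) ≤ 3 := by
    refine w.card_le_three_of_length_eq_dist hw (fun y hy => ?_) fun y hy z hz => ?_
    · exact List.mem_toFinset.1 (mem_inter.1 hy).1
    · have hyc := hF.adj p hp y (mem_inter.1 hy).2
      have hzc := hF.adj p hp z (mem_inter.1 hz).2
      exact dist_le (Walk.cons hyc.symm (Walk.cons hzc Walk.nil))
  omega

theorem IsStarPacking.exists_distWithinTwo (hF : G.IsStarPacking b F) (hbase : baseGraph G F ≤ H)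
    (hHG : H ≤ G) (hu : u ∈ S) (hv : v ∈ S) :
    ∃ H', H ≤ H' ∧ H' ≤ G ∧ (G.Reachable u v → G.DistWithinTwo H' u v) ∧
      H'.edgeSet.ncard + 3 * potential G H' S F ≤ H.edgeSet.ncard + 3 * potential G H S F := by
  by_cases hdone : G.Reachable u v → G.DistWithinTwo H u v
  · exact ⟨H, le_rfl, hHG, hdone, le_rfl⟩
  obtain ⟨huv, hfar⟩ := Classical.not_imp.1 hdone
  have hne : u ≠ v := by
    rintro rfl
    exact hfar distWithinTwo_self
  obtain ⟨w, hw⟩ := huv.exists_walk_length_eq_dist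
  set H' := H ⊔ fromEdgeSet {e | e ∈ w.edges}
  have hHH' : H ≤ H' := le_sup_left
  have hwH' : ∀ e ∈ w.edges, e ∈ H'.edgeSet := fun e he => by
    rw [edgeSet_sup, edgeSet_fromEdgeSet]
    exact Or.inr ⟨he, not_isDiag_of_mem_edgeSet _ (w.edges_subset_edgeSet he)⟩
  have hH'G : H' ≤ G := sup_le hHG fun x y hxy =>
    w.edges_subset_edgeSet ((fromEdgeSet_adj _).1 hxy).1
  have hnear : G.DistWithinTwo H' u v := by
    set w' := w.transfer H' hwH'
    exact ⟨w'.reachable, (dist_le w').trans (by simp [w', hw])⟩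
  refine ⟨H', hHH', hH'G, fun _ => hnear, ?_⟩
  have hcount : H'.edgeSet.ncard ≤ _ :=
    ncard_edgeSet_sup_le_add_sum (F := F) hbase (w.isPath_of_length_eq_dist hw)
  have hpair := add_sum_le_sum_of_pair (a := ∑ p ∈ F, #(w.support.toFinset ∩ p.2))
    (f := fun s => 3 * ∑ p ∈ F, cappedExcess G H' s p.1)
    (g := fun s => 3 * ∑ p ∈ F, cappedExcess G H s p.1) hu hv hne
    (fun s _ => Nat.mul_le_mul_left 3 (sum_le_sum fun p _ => cappedExcess_anti hHH'))
    (by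
      have := sum_le_sum fun p hp => hF.card_inter_add_le hbase hHH' hH'G hfar hw hwH' hp
      simp only [sum_add_distrib, mul_add, mul_sum] at this ⊢
      omega)
  simp only [potential, mul_sum] at hpair ⊢
  omega

theorem IsStarPacking.exists_forall_distWithinTwo (hF : G.IsStarPacking b F)
    (P : Finset (V × V)) (hP : P ⊆ S ×ˢ S) :
    ∃ H, baseGraph G F ≤ H ∧ H ≤ G ∧
      (∀ q ∈ P, G.Reachable q.1 q.2 → G.DistWithinTwo H q.1 q.2) ∧
      H.edgeSet.ncard + 3 * potential G H S F ≤
        (baseGraph G F).edgeSet.ncard + 3 * potential G (baseGraph G F) S F := by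
  induction P using Finset.induction_on with
  | empty => exact ⟨baseGraph G F, le_rfl, baseGraph_le, by simp, le_rfl⟩
  | insert q P _ ih =>
    obtain ⟨H, hbase, hHG, hP', hcost⟩ := ih ((subset_insert _ _).trans hP)
    obtain ⟨hq₁, hq₂⟩ := mem_product.1 (hP (mem_insert_self q P))
    obtain ⟨H', hHH', hH'G, hq, hcost'⟩ := hF.exists_distWithinTwo hbase hHG hq₁ hq₂
    refine ⟨H', hbase.trans hHH', hH'G, ?_, hcost'.trans hcost⟩
    simp only [mem_insert, forall_eq_or_imp]
    exact ⟨hq, fun r hr hreach => (hP' r hr hreach).mono hHH'⟩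

end PathBuying

theorem exists_forall_distWithinTwo_ncard_le [Fintype V] (G : SimpleGraph V) (S : Finset V)
    (b : ℕ) (hS : #S ≤ (b + 1) ^ 2) :
    ∃ H ≤ G, H.edgeSet.ncard ≤ 10 * Fintype.card V * (b + 1) ∧
      ∀ u ∈ S, ∀ v ∈ S, G.Reachable u v → G.DistWithinTwo H u v := by
  classical
  obtain ⟨F, hF, hsparse⟩ := exists_isStarPacking_ncard_neighborSet_diff_le G b
  obtain ⟨H, -, hHG, hH, hcost⟩ := hF.exists_forall_distWithinTwo (S ×ˢ S) subset_rfl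
  refine ⟨H, hHG, ?_, fun u hu v hv => hH (u, v) (mem_product.2 ⟨hu, hv⟩)⟩
  have hbase := hF.ncard_edgeSet_baseGraph_le hsparse
  have hpot := potential_le (G := G) (H := baseGraph G F) S F
  have hSF : #S * #F ≤ (b + 1) * Fintype.card V :=
    calc #S * #F ≤ (b + 1) ^ 2 * #F := by gcongr
      _ = (b + 1) * (#F * (b + 1)) := by ring
      _ ≤ (b + 1) * Fintype.card V := by gcongr; exact hF.card_mul_le
  calc H.edgeSet.ncard ≤ Fintype.card V * b + Fintype.card V + 9 * (#S * #F) := by omega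
    _ ≤ Fintype.card V * b + Fintype.card V + 9 * ((b + 1) * Fintype.card V) := by gcongr
    _ = 10 * Fintype.card V * (b + 1) := by ring

end SimpleGraph

/-- **Subsetwise spanner** (Theorem 3 of the paper).
There is an absolute constant `c > 0` such that for every finite simple graph `G`
on `n` vertices and every `S ⊆ V`, there is a spanning subgraph `H ≤ G` with at
most `c · n · √|S|` edges such that `δ_H(u,v) ≤ δ_G(u,v) + 2` for all `u, v ∈ S`
in the same connected component of `G`. -/
theorem subsetwise_spanner :
    ∃ c : ℝ, 0 < c ∧
      ∀ (V : Type) [Fintype V] (G : SimpleGraph V) (S : Finset V),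
        ∃ H : SimpleGraph V, H ≤ G ∧
          (H.edgeSet.ncard : ℝ) ≤ c * (Fintype.card V : ℝ) * Real.sqrt (S.card : ℝ) ∧
          ∀ u ∈ S, ∀ v ∈ S, G.Reachable u v →
            H.Reachable u v ∧ H.dist u v ≤ G.dist u v + 2 := by
  refine ⟨20, by norm_num, fun V _ G S => ?_⟩
  obtain rfl | hS := S.eq_empty_or_nonempty
  · exact ⟨⊥, bot_le, by simp, by simp⟩
  obtain ⟨H, hHG, hcard, hH⟩ :=
    G.exists_forall_distWithinTwo_ncard_le S (Nat.sqrt #S) (Nat.lt_succ_sqrt' #S).le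
  refine ⟨H, hHG, ?_, hH⟩
  have h₁ : (1 : ℝ) ≤ √(#S : ℝ) := Real.one_le_sqrt.2 (by exact_mod_cast hS.card_pos)
  have h₂ : (Nat.sqrt #S : ℝ) ≤ √(#S : ℝ) := Real.nat_sqrt_le_real_sqrt
  calc (H.edgeSet.ncard : ℝ) ≤ 10 * Fintype.card V * (Nat.sqrt #S + 1) := by
        exact_mod_cast hcard
    _ ≤ 20 * Fintype.card V * √(#S : ℝ) := by
      have : (0 : ℝ) ≤ Fintype.card V := by positivity
      nlinarith
end

section
/- There exists an absolute constant c > 0 such that the following holds. For every real β with 0 ≤ β ≤ 1 and every finite simple undirected unweighted graph G = (V, E) on n vertices, there exist a collection 𝒞 = {C_1, ..., C_q} of pairwise disjoint nonempty subsets of V with q ≤ n^{1-β}, and a spanning subgraph H of G with at most c · n^{1+β} edges, such that: (1) every edge uv of G that is not an edge of H has its two endpoints in two different clusters of 𝒞 (in particular both endpoints lie in some cluster), and (2) any two vertices belonging to the same cluster of 𝒞 are at distance at most 2 in H. -/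
/-!
Put `D = ⌈n^β⌉`. Greedily, as long as some vertex has at least `D` neighbours not yet
clustered, make `D` of them a new cluster with that vertex as its centre. This gives at most
`n / D ≤ n^{1-β}` clusters, and afterwards every vertex has fewer than `D` unclustered
neighbours. Keep in `H` every edge at an unclustered vertex (fewer than `nD`), every edge inside
a cluster and every edge from a centre to its cluster (at most `(D + 1) D` per cluster, so at
most `2nD` in total). Every edge not kept joins two different clusters, and two vertices of a
cluster are joined in `H` through its centre.
-/

open Finset

namespace SimpleGraph

variable {V : Type*}

theorem edist_le_two_of_adj_of_adj {G : SimpleGraph V} {u v w : V}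
    (hu : G.Adj w u) (hv : G.Adj w v) : G.edist u v ≤ 2 :=
  calc G.edist u v ≤ G.edist u w + G.edist w v := SimpleGraph.edist_triangle
    _ = 2 := by
      rw [edist_eq_one_iff_adj.mpr hu.symm, edist_eq_one_iff_adj.mpr hv]
      norm_num

variable [DecidableEq V]

theorem ncard_edgeSet_fromRel_le [Fintype V] (r : V → V → Prop) [DecidableRel r] :
    (fromRel r).edgeSet.ncard ≤ #{p : V × V | r p.1 p.2} := by
  let P : Finset (V × V) := {p | r p.1 p.2}
  have hsub : (fromRel r).edgeSet ⊆ ↑(P.image fun p => s(p.1, p.2)) := by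
    rintro ⟨a, b⟩ ⟨-, hab | hba⟩
    · exact mem_image.mpr ⟨(a, b), mem_filter.mpr ⟨mem_univ _, hab⟩, rfl⟩
    · exact mem_image.mpr ⟨(b, a), mem_filter.mpr ⟨mem_univ _, hba⟩, Sym2.eq_swap⟩
  calc (fromRel r).edgeSet.ncard ≤ #(P.image fun p => s(p.1, p.2)) := by
        rw [← Set.ncard_coe_finset]
        exact Set.ncard_le_ncard hsub (Finset.finite_toSet _)
    _ ≤ #P := card_image_le

variable (G : SimpleGraph V)

theorem exists_greedy_clustering [DecidableRel G.Adj] {D : ℕ} (hD : 0 < D) (U : Finset V) :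
    ∃ 𝒞 : Finset (Finset V),
      (∀ C ∈ 𝒞, #C = D ∧ C ⊆ U ∧ ∃ v, ∀ u ∈ C, G.Adj v u) ∧
      (𝒞 : Set (Finset V)).PairwiseDisjoint id ∧
      ∀ x, #{u ∈ U \ 𝒞.biUnion id | G.Adj x u} < D := by
  induction U using Finset.strongInduction with
  | _ U ih =>
  by_cases h : ∃ x, D ≤ #{u ∈ U | G.Adj x u}
  · obtain ⟨x, hx⟩ := h
    obtain ⟨C, hCx, hCD⟩ := exists_subset_card_eq hx
    have hCU : C ⊆ U := hCx.trans (filter_subset _ _)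
    obtain ⟨𝒞, h𝒞, hdisj, hsmall⟩ :=
      ih (U \ C) (sdiff_ssubset hCU (card_pos.mp (hCD ▸ hD)))
    refine ⟨insert C 𝒞, ?_, ?_, fun y => ?_⟩
    · simp only [mem_insert, forall_eq_or_imp]
      refine ⟨⟨hCD, hCU, x, fun u hu => (mem_filter.mp (hCx hu)).2⟩, fun C' hC' => ?_⟩
      obtain ⟨hcard, hsub, hcentre⟩ := h𝒞 C' hC'
      exact ⟨hcard, hsub.trans sdiff_subset, hcentre⟩
    · rw [coe_insert]
      exact hdisj.insert fun C' hC' _ =>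
        (disjoint_of_subset_left (h𝒞 C' hC').2.1 sdiff_disjoint).symm
    · rw [biUnion_insert, id_eq, ← sup_eq_union, ← sdiff_sdiff_left]
      exact hsmall y
  · simp only [not_exists, not_le] at h
    exact ⟨∅, by simp, by simp, by simpa using h⟩

/-- The relation is kept asymmetric (only `b` is required to be unclustered) so that it relates
few ordered pairs, which bound the edges by `ncard_edgeSet_fromRel_le`. -/
def clusterSpanner (𝒞 : Finset (Finset V)) (centre : Finset V → V) : SimpleGraph V :=
  fromRel fun a b => G.Adj a b ∧ (b ∉ 𝒞.biUnion id ∨ ∃ C ∈ 𝒞, a ∈ insert (centre C) C ∧ b ∈ C)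

variable (𝒞 : Finset (Finset V)) (centre : Finset V → V)

theorem clusterSpanner_le : G.clusterSpanner 𝒞 centre ≤ G := by
  rintro a b ⟨-, ⟨hab, -⟩ | ⟨hba, -⟩⟩
  · exact hab
  · exact hba.symm

theorem exists_mem_ne_of_not_adj_clusterSpanner {u v : V} (huv : G.Adj u v)
    (hH : ¬ (G.clusterSpanner 𝒞 centre).Adj u v) :
    ∃ C₁ ∈ 𝒞, ∃ C₂ ∈ 𝒞, C₁ ≠ C₂ ∧ u ∈ C₁ ∧ v ∈ C₂ := by
  simp only [clusterSpanner, fromRel_adj, huv.ne, huv, huv.symm, true_and, ne_eq,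
    not_false_eq_true, not_or, not_not, not_exists, not_and] at hH
  obtain ⟨⟨hv, hsame⟩, hu, -⟩ := hH
  obtain ⟨C₁, hC₁, huC₁⟩ := mem_biUnion.mp hu
  obtain ⟨C₂, hC₂, hvC₂⟩ := mem_biUnion.mp hv
  exact ⟨C₁, hC₁, C₂, hC₂, fun h => hsame C₁ hC₁ (mem_insert_of_mem huC₁) (h ▸ hvC₂),
    huC₁, hvC₂⟩

theorem edist_clusterSpanner_le_two (hcentre : ∀ C ∈ 𝒞, ∀ u ∈ C, G.Adj (centre C) u)
    {C : Finset V} (hC : C ∈ 𝒞) {u v : V} (hu : u ∈ C) (hv : v ∈ C) :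
    (G.clusterSpanner 𝒞 centre).edist u v ≤ 2 := by
  have hadj : ∀ w ∈ C, (G.clusterSpanner 𝒞 centre).Adj (centre C) w := fun w hw =>
    ⟨(hcentre C hC w hw).ne, Or.inl ⟨hcentre C hC w hw, Or.inr ⟨C, hC, mem_insert_self _ _, hw⟩⟩⟩
  exact edist_le_two_of_adj_of_adj (hadj u hu) (hadj v hv)

variable [Fintype V] [DecidableRel G.Adj]

theorem ncard_edgeSet_clusterSpanner_le {D : ℕ} (hcard : ∀ C ∈ 𝒞, #C = D)
    (hq : #𝒞 * D ≤ Fintype.card V)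
    (hsmall : ∀ x, #{u ∈ univ \ 𝒞.biUnion id | G.Adj x u} < D) :
    (G.clusterSpanner 𝒞 centre).edgeSet.ncard ≤ 3 * Fintype.card V * D := by
  set X := 𝒞.biUnion id
  have hsub : ({p : V × V | G.Adj p.1 p.2 ∧
      (p.2 ∉ X ∨ ∃ C ∈ 𝒞, p.1 ∈ insert (centre C) C ∧ p.2 ∈ C)} : Finset (V × V)) ⊆
      univ.biUnion (fun a => {a} ×ˢ {u ∈ univ \ X | G.Adj a u}) ∪
        𝒞.biUnion (fun C => insert (centre C) C ×ˢ C) := by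
    rintro ⟨a, b⟩ hab
    simp only [mem_filter, mem_univ, true_and] at hab
    obtain ⟨hadj, hb | ⟨C, hC, ha, hb⟩⟩ := hab
    · exact mem_union_left _ (mem_biUnion.mpr ⟨a, mem_univ a, by simp [hb, hadj]⟩)
    · exact mem_union_right _ (mem_biUnion.mpr ⟨C, hC, mem_product.mpr ⟨ha, hb⟩⟩)
  have hfree : ∑ a, #({a} ×ˢ {u ∈ univ \ X | G.Adj a u}) ≤ Fintype.card V * D := by
    simpa using sum_le_sum fun a (_ : a ∈ univ) => (hsmall a).le
  have hclustered : ∑ C ∈ 𝒞, #(insert (centre C) C ×ˢ C) ≤ #𝒞 * (2 * D * D) := by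
    refine (sum_le_sum fun C hC => ?_).trans_eq (sum_const_nat fun _ _ => rfl)
    have hinsert : #(insert (centre C) C) ≤ D + 1 := hcard C hC ▸ card_insert_le _ _
    rw [card_product, hcard C hC]
    nlinarith [Nat.le_mul_self D]
  calc (G.clusterSpanner 𝒞 centre).edgeSet.ncard
      ≤ _ := ncard_edgeSet_fromRel_le _
    _ ≤ _ := (card_le_card hsub).trans (card_union_le _ _)
    _ ≤ Fintype.card V * D + #𝒞 * (2 * D * D) :=
        add_le_add (card_biUnion_le.trans hfree) (card_biUnion_le.trans hclustered)
    _ ≤ 3 * Fintype.card V * D := by nlinarith [Nat.mul_le_mul_right (2 * D) hq]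

theorem exists_clustering {D : ℕ} (hD : 0 < D) :
    ∃ (𝒞 : Finset (Finset V)) (H : SimpleGraph V), H ≤ G ∧
      (∀ C ∈ 𝒞, C.Nonempty) ∧
      (𝒞 : Set (Finset V)).PairwiseDisjoint id ∧
      #𝒞 * D ≤ Fintype.card V ∧
      H.edgeSet.ncard ≤ 3 * Fintype.card V * D ∧
      (∀ u v : V, G.Adj u v → ¬ H.Adj u v →
        ∃ C₁ ∈ 𝒞, ∃ C₂ ∈ 𝒞, C₁ ≠ C₂ ∧ u ∈ C₁ ∧ v ∈ C₂) ∧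
      (∀ C ∈ 𝒞, ∀ u ∈ C, ∀ v ∈ C, H.edist u v ≤ 2) := by
  rcases isEmpty_or_nonempty V with hV | hV
  · exact ⟨∅, ⊥, bot_le, by simp, by simp, by simp, by simp, fun u => isEmptyElim u, by simp⟩
  obtain ⟨𝒞, h𝒞, hdisj, hsmall⟩ := G.exists_greedy_clustering hD univ
  choose! centre hcentre using fun C hC => (h𝒞 C hC).2.2
  have hcard : ∀ C ∈ 𝒞, #C = D := fun C hC => (h𝒞 C hC).1
  have hq : #𝒞 * D ≤ Fintype.card V := by
    calc #𝒞 * D = ∑ C ∈ 𝒞, #C := (sum_const_nat hcard).symm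
      _ = #(𝒞.biUnion id) := (card_biUnion hdisj).symm
      _ ≤ Fintype.card V := card_le_univ _
  exact ⟨𝒞, G.clusterSpanner 𝒞 centre, G.clusterSpanner_le 𝒞 centre,
    fun C hC => card_pos.mp (hcard C hC ▸ hD), hdisj, hq,
    G.ncard_edgeSet_clusterSpanner_le 𝒞 centre hcard hq hsmall,
    fun _ _ => G.exists_mem_ne_of_not_adj_clusterSpanner 𝒞 centre,
    fun _ hC _ hu _ hv => G.edist_clusterSpanner_le_two 𝒞 centre hcentre hC hu hv⟩

end SimpleGraph

theorem exists_nat_rpow_le_and_mul_le (n : ℕ) {β : ℝ} (hβ : 0 ≤ β) :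
    ∃ D : ℕ, 0 < D ∧ (n : ℝ) ^ β ≤ D ∧ (n : ℝ) * D ≤ 2 * (n : ℝ) ^ (1 + β) := by
  rcases n.eq_zero_or_pos with rfl | hn
  · refine ⟨1, one_pos, ?_, by simp [Real.rpow_nonneg]⟩
    simpa using Real.zero_rpow_le_one β
  · have hnβ : 1 ≤ (n : ℝ) ^ β := Real.one_le_rpow (by exact_mod_cast hn) hβ
    have hceil := Nat.ceil_lt_add_one (zero_le_one.trans hnβ)
    refine ⟨⌈(n : ℝ) ^ β⌉₊, Nat.ceil_pos.mpr (by linarith), Nat.le_ceil _, ?_⟩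
    rw [Real.rpow_add (by positivity), Real.rpow_one]
    nlinarith [(n.cast_nonneg : (0 : ℝ) ≤ n)]

theorem natCast_le_rpow_one_sub_of_mul_le {q D n : ℕ} {β : ℝ} (hD : 0 < D) (hq : q * D ≤ n)
    (hβD : (n : ℝ) ^ β ≤ D) : (q : ℝ) ≤ (n : ℝ) ^ (1 - β) := by
  rcases n.eq_zero_or_pos with rfl | hn
  · obtain rfl : q = 0 := by simpa [hD.ne'] using hq
    simpa using Real.rpow_nonneg le_rfl _
  · have hn' : (0 : ℝ) < n := by exact_mod_cast hn
    rw [Real.rpow_sub hn', Real.rpow_one, le_div_iff₀ (by positivity)]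
    calc (q : ℝ) * (n : ℝ) ^ β ≤ q * D := by gcongr
      _ ≤ n := by exact_mod_cast hq

/-- **Clustering lemma** (Lemma 1 of the paper).
There is an absolute constant `c > 0` such that for every `β ∈ [0,1]` and every
finite simple graph `G` on `n` vertices there are a clustering `𝒞` with at most
`n^{1-β}` pairwise disjoint nonempty clusters and a spanning subgraph `H ≤ G`
with at most `c · n^{1+β}` edges satisfying the missing-edge property (every edge
of `G` absent from `H` has its endpoints in two different clusters) and the
cluster-diameter property (any two vertices of the same cluster are at distance
at most `2` in `H`). -/
theorem clustering_lemma :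
    ∃ c : ℝ, 0 < c ∧
      ∀ β : ℝ, 0 ≤ β → β ≤ 1 →
      ∀ (V : Type) [Fintype V] [DecidableEq V] (G : SimpleGraph V),
        ∃ (𝒞 : Finset (Finset V)) (H : SimpleGraph V), H ≤ G ∧
          (∀ C ∈ 𝒞, C.Nonempty) ∧
          ((𝒞 : Set (Finset V)).Pairwise fun C₁ C₂ => Disjoint C₁ C₂) ∧
          (𝒞.card : ℝ) ≤ (Fintype.card V : ℝ) ^ ((1 : ℝ) - β) ∧
          (H.edgeSet.ncard : ℝ) ≤ c * (Fintype.card V : ℝ) ^ ((1 : ℝ) + β) ∧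
          (∀ u v : V, G.Adj u v → ¬ H.Adj u v →
            ∃ C₁ ∈ 𝒞, ∃ C₂ ∈ 𝒞, C₁ ≠ C₂ ∧ u ∈ C₁ ∧ v ∈ C₂) ∧
          (∀ C ∈ 𝒞, ∀ u ∈ C, ∀ v ∈ C, H.edist u v ≤ 2) := by
  refine ⟨6, by norm_num, fun β hβ _ V _ _ G => ?_⟩
  classical
  obtain ⟨D, hD, hβD, hnD⟩ := exists_nat_rpow_le_and_mul_le (Fintype.card V) hβ
  obtain ⟨𝒞, H, hHG, hne, hdisj, hq, hedges, hmissing, hdiam⟩ := G.exists_clustering hD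
  refine ⟨𝒞, H, hHG, hne, hdisj, natCast_le_rpow_one_sub_of_mul_le hD hq hβD, ?_, hmissing, hdiam⟩
  calc (H.edgeSet.ncard : ℝ) ≤ 3 * Fintype.card V * D := by exact_mod_cast hedges
    _ ≤ 6 * (Fintype.card V : ℝ) ^ (1 + β) := by linarith
end

section
/- Let G = (V, E) be a finite simple undirected unweighted graph, let 𝒞 be a collection of pairwise disjoint subsets of V, and let H be a spanning subgraph of G satisfying the missing-edge property (every edge of G absent from H has its two endpoints in two different clusters of 𝒞) and the cluster-diameter property (any two vertices in the same cluster of 𝒞 are at distance at most 2 in H). Let ρ be a shortest path in G between two vertices u and v, and suppose ρ contains exactly t edges that are not edges of H. Then the number of clusters of 𝒞 that contain at least one vertex of ρ is at least t/2. -/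
/-!
Every edge of `ρ` missing from `H` joins two distinct clusters that meet `ρ`, so edges of `ρ`
missing from `H` and clusters meeting `ρ` have at least `2t` incidences. Conversely, a cluster has
`H`-diameter, hence `G`-diameter, at most 2; as subpaths of a shortest path are shortest paths, its
vertices occupy at most three consecutive positions of `ρ`, so it meets at most four edges of `ρ`.
Double counting gives `2t ≤ 4 · #{clusters meeting ρ}`.
-/

open Finset SimpleGraph

theorem Finset.card_le_add_one_of_forall_le_add {K : Finset ℕ} {n : ℕ}
    (h : ∀ i ∈ K, ∀ j ∈ K, j ≤ i + n) : #K ≤ n + 1 := by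
  rcases K.eq_empty_or_nonempty with rfl | hne
  · simp
  calc #K ≤ #(Icc (K.min' hne) (K.min' hne + n)) :=
        card_le_card fun j hj => mem_Icc.2 ⟨K.min'_le j hj, h _ (K.min'_mem hne) j hj⟩
    _ = n + 1 := by rw [Nat.card_Icc]; omega

namespace SimpleGraph.Walk

variable {V : Type*} {G : SimpleGraph V} {u v : V}

theorem edist_getVert_of_length_eq_dist (p : G.Walk u v) (hp : p.length = G.dist u v)
    {i j : ℕ} (hij : i ≤ j) (hj : j ≤ p.length) :
    G.edist (p.getVert i) (p.getVert j) = (j - i : ℕ) := by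
  let q := (p.drop i).take (j - i)
  have hq : q.length = G.dist (p.getVert i) ((p.drop i).getVert (j - i)) :=
    length_eq_dist_of_subwalk hp (((p.drop i).isSubwalk_take _).trans (p.isSubwalk_drop i))
  have hend : (p.drop i).getVert (j - i) = p.getVert j := by
    rw [drop_getVert, Nat.add_sub_cancel' hij]
  rw [← hend, ← q.reachable.coe_dist_eq_edist, ← hq, take_length, drop_length]
  congr 1
  omega

theorem le_add_two_of_edist_getVert_le_two (p : G.Walk u v) (hp : p.length = G.dist u v)
    {i j : ℕ} (hj : j ≤ p.length) (h : G.edist (p.getVert i) (p.getVert j) ≤ 2) :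
    j ≤ i + 2 := by
  rcases le_total i j with hij | hji
  · rw [p.edist_getVert_of_length_eq_dist hp hij hj] at h
    have : j - i ≤ 2 := by exact_mod_cast h
    omega
  · omega

theorem card_filter_edges_exists_mem_le_four [DecidableEq V] (p : G.Walk u v)
    (hp : p.length = G.dist u v) (C : Finset V) (hC : ∀ x ∈ C, ∀ y ∈ C, G.edist x y ≤ 2) :
    #{e ∈ p.edges.toFinset | ∃ x ∈ C, x ∈ e} ≤ 4 := by
  let K : Finset ℕ := {k ∈ range p.length | p.getVert k ∈ C ∨ p.getVert (k + 1) ∈ C}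
  have hK : ∀ k ∈ K, ∀ k' ∈ K, k' ≤ k + 3 := by
    intro k hk k' hk'
    simp only [K, mem_filter, mem_range] at hk hk'
    rcases hk with ⟨hk, h | h⟩ <;> rcases hk' with ⟨hk', h' | h'⟩ <;>
      have := p.le_add_two_of_edist_getVert_le_two hp (by omega) (hC _ h _ h') <;>
      omega
  calc #{e ∈ p.edges.toFinset | ∃ x ∈ C, x ∈ e}
      ≤ #(K.image fun k => s(p.getVert k, p.getVert (k + 1))) := by
        refine card_le_card fun e he => ?_
        obtain ⟨he, x, hxC, hxe⟩ := mem_filter.1 he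
        obtain ⟨k, hk, rfl⟩ := List.mem_iff_getElem.1 (List.mem_toFinset.1 he)
        rw [getElem_edges] at hxe ⊢
        rw [length_edges] at hk
        refine mem_image_of_mem _ (mem_filter.2 ⟨mem_range.2 hk, ?_⟩)
        rcases Sym2.mem_iff.1 hxe with rfl | rfl
        · exact .inl hxC
        · exact .inr hxC
    _ ≤ #K := card_image_le
    _ ≤ 4 := card_le_add_one_of_forall_le_add hK

end SimpleGraph.Walk

theorem two_le_card_filter_exists_mem_mk {V : Type*} [DecidableEq V] {𝒮 : Finset (Finset V)}
    {x y : V}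
    (h : ∃ C₁ ∈ 𝒮, ∃ C₂ ∈ 𝒮, C₁ ≠ C₂ ∧ x ∈ C₁ ∧ y ∈ C₂) :
    2 ≤ #{C ∈ 𝒮 | ∃ z ∈ C, z ∈ s(x, y)} := by
  obtain ⟨C₁, h₁, C₂, h₂, hne, hx, hy⟩ := h
  calc 2 = #{C₁, C₂} := (card_pair hne).symm
    _ ≤ _ := card_le_card <| by
      simp only [insert_subset_iff, singleton_subset_iff, mem_filter]
      exact ⟨⟨h₁, x, hx, Sym2.mem_mk_left x y⟩, ⟨h₂, y, hy, Sym2.mem_mk_right x y⟩⟩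

theorem clusters_on_shortest_path_general
    (V : Type)
    (G H : SimpleGraph V) (hHG : H ≤ G)
    (𝒞 : Finset (Finset V))
    (hmiss : ∀ u v : V, G.Adj u v → ¬ H.Adj u v →
      ∃ C₁ ∈ 𝒞, ∃ C₂ ∈ 𝒞, C₁ ≠ C₂ ∧ u ∈ C₁ ∧ v ∈ C₂)
    (hdiam : ∀ C ∈ 𝒞, ∀ u ∈ C, ∀ v ∈ C, H.edist u v ≤ 2)
    (u v : V) (ρ : G.Walk u v) (hshort : ρ.length = G.dist u v)
    (t : ℕ) (ht : {e | e ∈ ρ.edges ∧ e ∉ H.edgeSet}.ncard = t) :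
    (t : ℝ) / 2 ≤
      ({C | C ∈ 𝒞 ∧ ∃ x ∈ C, x ∈ ρ.support} : Set (Finset V)).ncard := by
  classical
  let M : Finset (Sym2 V) := {e ∈ ρ.edges.toFinset | e ∉ H.edgeSet}
  let S : Finset (Finset V) := {C ∈ 𝒞 | ∃ x ∈ C, x ∈ ρ.support}
  have hcount : #M * 2 ≤ #S * 4 := by
    refine card_mul_le_card_mul (fun e C => ∃ x ∈ C, x ∈ e) ?_ ?_
    · intro e he
      obtain ⟨heρ, heH⟩ := mem_filter.1 he
      induction e using Sym2.ind with | h x y => ?_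
      have heρ := List.mem_toFinset.1 heρ
      obtain ⟨C₁, h₁, C₂, h₂, hne, hx, hy⟩ := hmiss x y (ρ.adj_of_mem_edges heρ) heH
      have hC₁ : C₁ ∈ S := mem_filter.2 ⟨h₁, x, hx, ρ.fst_mem_support_of_mem_edges heρ⟩
      have hC₂ : C₂ ∈ S := mem_filter.2 ⟨h₂, y, hy, ρ.snd_mem_support_of_mem_edges heρ⟩
      exact two_le_card_filter_exists_mem_mk ⟨C₁, hC₁, C₂, hC₂, hne, hx, hy⟩
    · intro C hC
      refine (card_le_card fun e he => ?_).trans (ρ.card_filter_edges_exists_mem_le_four hshort C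
        fun x hx y hy => (edist_anti hHG).trans (hdiam C (mem_filter.1 hC).1 x hx y hy))
      simp only [M, mem_bipartiteBelow, mem_filter] at he ⊢
      exact ⟨he.1.1, he.2⟩
  have hM : #M = t := by rw [← ht, ← Set.ncard_coe_finset]; congr; ext; simp [M]
  have hS : ({C | C ∈ 𝒞 ∧ ∃ x ∈ C, x ∈ ρ.support} : Set (Finset V)).ncard = #S := by
    rw [← Set.ncard_coe_finset]; congr; ext; simp [S]
  rw [hS, ← hM, div_le_iff₀ two_pos]
  exact_mod_cast (by omega : #M ≤ #S * 2)

/-- **Cluster-counting lemma** (Lemma 2 of the paper).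
If `H ≤ G` and the clustering `𝒞` satisfy the missing-edge and cluster-diameter
properties, and a shortest path `ρ` in `G` between `u` and `v` contains exactly
`t` edges absent from `H`, then at least `t/2` clusters of `𝒞` contain a vertex
of `ρ`. -/
theorem clusters_on_shortest_path
    (V : Type) [Fintype V] [DecidableEq V]
    (G H : SimpleGraph V) (hHG : H ≤ G)
    (𝒞 : Finset (Finset V))
    (hdisj : (𝒞 : Set (Finset V)).Pairwise fun C₁ C₂ => Disjoint C₁ C₂)
    (hmiss : ∀ u v : V, G.Adj u v → ¬ H.Adj u v →
      ∃ C₁ ∈ 𝒞, ∃ C₂ ∈ 𝒞, C₁ ≠ C₂ ∧ u ∈ C₁ ∧ v ∈ C₂)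
    (hdiam : ∀ C ∈ 𝒞, ∀ u ∈ C, ∀ v ∈ C, H.edist u v ≤ 2)
    (u v : V) (ρ : G.Walk u v) (hpath : ρ.IsPath) (hshort : ρ.length = G.dist u v)
    (t : ℕ) (ht : {e | e ∈ ρ.edges ∧ e ∉ H.edgeSet}.ncard = t) :
    (t : ℝ) / 2 ≤
      ({C | C ∈ 𝒞 ∧ ∃ x ∈ C, x ∈ ρ.support} : Set (Finset V)).ncard :=
  clusters_on_shortest_path_general V G H hHG 𝒞 hmiss hdiam u v ρ hshort t ht
end

section
/- Let G = (V, E) be a finite simple undirected unweighted graph, let H be a spanning subgraph of G, and let C ⊆ V be a nonempty set of vertices such that any two vertices of C are at distance at most 2 in H. Let u, v ∈ V be in the same connected component of G, and suppose some shortest u–v path in G contains at least one vertex of C. If δ_H(u, C) = δ_G(u, C) and δ_H(v, C) = δ_G(v, C), where δ(x, C) denotes the minimum distance from x to a vertex of C, then δ_H(u, v) ≤ δ_G(u, v) + 2. -/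
/-!
Pick `x ∈ C` on the shortest path, and `y, z ∈ C` realising the `H`-distances from `u` and `v`
to `C`. Since these agree with the `G`-distances, `δ_H(u, y) ≤ δ_G(u, x)` and
`δ_H(v, z) ≤ δ_G(v, x)`, so going `u → y → z → v` in `H` costs at most
`δ_G(u, x) + 2 + δ_G(x, v) = δ_G(u, v) + 2`, the last equality because `x` lies on a shortest path.
-/

lemma exists_mem_le_of_biInf_le {α β : Type*} [CompleteLinearOrder β] [WellFoundedLT β]
    {f : α → β} {s : Set α} {a : β} (hs : s.Nonempty)
    (h : ⨅ x ∈ s, f x ≤ a) : ∃ x ∈ s, f x ≤ a := by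
  refine ⟨Function.argminOn f s hs, Function.argminOn_mem f s hs, le_trans ?_ h⟩
  exact le_iInf₂ fun x hx => Function.argminOn_le f s hx

namespace SimpleGraph

lemma Walk.edist_add_edist_le_length {V : Type*} [DecidableEq V] {G : SimpleGraph V} {u v x : V}
    (p : G.Walk u v) (hx : x ∈ p.support) :
    G.edist u x + G.edist x v ≤ p.length := by
  calc G.edist u x + G.edist x v
      ≤ (p.takeUntil x hx).length + (p.dropUntil x hx).length :=
        add_le_add (edist_le _) (edist_le _)
    _ = p.length := by
        rw [← Nat.cast_add, ← length_append, take_spec]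

end SimpleGraph

open SimpleGraph in
theorem distance_via_cluster_general
    (V : Type) (G H : SimpleGraph V)
    (C : Set V)
    (hC : ∀ x ∈ C, ∀ y ∈ C, H.edist x y ≤ 2)
    (u v : V)
    (ρ : G.Walk u v) (hshort : ρ.length = G.dist u v)
    (hmeet : ∃ x ∈ C, x ∈ ρ.support)
    (hu : (⨅ y ∈ C, H.edist u y) = ⨅ y ∈ C, G.edist u y)
    (hv : (⨅ y ∈ C, H.edist v y) = ⨅ y ∈ C, G.edist v y) :
    H.edist u v ≤ G.edist u v + 2 := by
  classical
  obtain ⟨x, hxC, hxρ⟩ := hmeet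
  obtain ⟨y, hyC, huy⟩ := exists_mem_le_of_biInf_le (f := H.edist u) ⟨x, hxC⟩
    (hu.trans_le (iInf₂_le x hxC))
  obtain ⟨z, hzC, hvz⟩ := exists_mem_le_of_biInf_le (f := H.edist v) ⟨x, hxC⟩
    (hv.trans_le (iInf₂_le x hxC))
  have hρ : G.edist u v = ρ.length := by
    rw [← Reachable.coe_dist_eq_edist ⟨ρ⟩, hshort]
  calc H.edist u v ≤ H.edist u y + H.edist y z + H.edist z v :=
        H.edist_triangle.trans (by gcongr; exact H.edist_triangle)
    _ ≤ G.edist u x + 2 + G.edist x v := by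
        gcongr
        · exact hC y hyC z hzC
        · rwa [edist_comm, G.edist_comm]
    _ = G.edist u x + G.edist x v + 2 := add_right_comm _ _ _
    _ ≤ G.edist u v + 2 := by
        rw [hρ]
        gcongr
        exact ρ.edist_add_edist_le_length hxρ

/-- If a nonempty set `C` has `H`-diameter at most `2`, some shortest `u`–`v`
path in `G` meets `C`, and the distances from `u` and from `v` to `C` are the
same in the spanning subgraph `H` as in `G`, then
`δ_H(u,v) ≤ δ_G(u,v) + 2`. -/
theorem distance_via_cluster
    (V : Type) [Fintype V] (G H : SimpleGraph V) (hHG : H ≤ G)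
    (C : Set V) (hne : C.Nonempty)
    (hC : ∀ x ∈ C, ∀ y ∈ C, H.edist x y ≤ 2)
    (u v : V) (hreach : G.Reachable u v)
    (ρ : G.Walk u v) (hpath : ρ.IsPath) (hshort : ρ.length = G.dist u v)
    (hmeet : ∃ x ∈ C, x ∈ ρ.support)
    (hu : (⨅ y ∈ C, H.edist u y) = ⨅ y ∈ C, G.edist u y)
    (hv : (⨅ y ∈ C, H.edist v y) = ⨅ y ∈ C, G.edist v y) :
    H.edist u v ≤ G.edist u v + 2 :=
  distance_via_cluster_general V G H C hC u v ρ hshort hmeet hu hv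
end

section
/- There exists an absolute constant c > 0 such that for every finite simple undirected unweighted graph G = (V, E) on n vertices there exists a spanning subgraph H of G with at most c · n^{3/2} edges such that for every pair of vertices u, v ∈ V in the same connected component of G, the distance in H satisfies δ_H(u, v) ≤ δ_G(u, v) + 2. -/
/-!
Take `d = ⌊√n⌋`. Choose centres greedily: while some vertex `a` has more than `d` neighbours
that are not yet clustered, make `a` a centre and cluster those neighbours. Each centre clusters
at least `d + 1` new vertices, so there are at most `n / (d + 1) ≤ d` centres. The spanner keeps
every edge at an unclustered vertex (at most `d` per vertex, charging each edge to its other end)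
and a shortest-path tree from each centre (at most `n` edges each). A shortest `u`–`v` path
through no clustered vertex survives; otherwise it passes a clustered vertex `a` next to a centre
`c`, and the route `u → c → v` through the tree of `c` has length at most
`(δ(u, a) + 1) + (δ(a, v) + 1)`.
-/

open Finset

namespace SimpleGraph

variable {V : Type*} {G H : SimpleGraph V}

lemma Reachable.exists_adj_dist_add_one_eq {x u : V} (h : G.Reachable x u) (hne : u ≠ x) :
    ∃ p, G.Adj p u ∧ G.dist x p + 1 = G.dist x u := by
  obtain ⟨w, hw⟩ := h.symm.exists_walk_length_eq_dist
  cases w with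
  | nil => exact absurd rfl hne
  | @cons _ b _ hadj q =>
    refine ⟨b, hadj.symm, ?_⟩
    have hqb : G.dist x b ≤ q.length := dist_comm (G := G) ▸ dist_le q
    have hub : G.dist x u ≤ G.dist x b + G.dist b u := hadj.symm.reachable.dist_triangle_right x
    rw [Walk.length_cons, dist_comm] at hw
    rw [dist_eq_one_iff_adj.mpr hadj.symm] at hub
    omega

lemma exists_sparse_subgraph_dist_from_le [Fintype V] (G : SimpleGraph V) (x : V) :
    ∃ T ≤ G, T.edgeSet.ncard ≤ Fintype.card V ∧
      ∀ w, G.Reachable x w → ∃ q : T.Walk x w, q.length ≤ G.dist x w := by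
  have hparent : ∀ w, ∃ p, G.Reachable x w → w ≠ x → G.Adj p w ∧ G.dist x p + 1 = G.dist x w :=
    fun w => by
      by_cases h : G.Reachable x w ∧ w ≠ x
      · exact (h.1.exists_adj_dist_add_one_eq h.2).imp fun _ hp _ _ => hp
      · exact ⟨x, fun h₁ h₂ => absurd ⟨h₁, h₂⟩ h⟩
  choose parent hparent using hparent
  refine ⟨G ⊓ fromRel fun a b => a = parent b, inf_le_left, ?_, ?_⟩
  · have hsub : (G ⊓ fromRel fun a b => a = parent b).edgeSet ⊆
        Set.range fun w => s(parent w, w) := by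
      intro e he
      induction e using Sym2.ind with
      | _ a b =>
        rw [mem_edgeSet, inf_adj, fromRel_adj] at he
        obtain ⟨-, -, rfl | rfl⟩ := he
        exacts [⟨b, rfl⟩, ⟨a, Sym2.eq_swap⟩]
    calc _ ≤ (Set.range fun w => s(parent w, w)).ncard := Set.ncard_le_ncard hsub
      _ ≤ (Set.univ : Set V).ncard := by rw [← Set.image_univ]; exact Set.ncard_image_le
      _ = Fintype.card V := by rw [Set.ncard_univ, Nat.card_eq_fintype_card]
  · intro w hw
    induction hd : G.dist x w generalizing w with
    | zero =>
      obtain rfl := (hw.dist_eq_zero_iff.mp hd).symm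
      exact ⟨.nil, by simp⟩
    | succ d ih =>
      have hwx : w ≠ x := by rintro rfl; simp at hd
      obtain ⟨hadj, hdist⟩ := hparent w hw hwx
      obtain ⟨q, hq⟩ := ih _ (hw.trans hadj.symm.reachable) (by omega)
      refine ⟨q.concat ⟨hadj, hadj.ne, .inl rfl⟩, ?_⟩
      rw [Walk.length_concat]
      omega

lemma ncard_edgeSet_inf_fromRel_notMem_le [Fintype V] [DecidableEq V] [DecidableRel G.Adj]
    (K : Finset V) {d : ℕ} (hd : ∀ a, #(G.neighborFinset a \ K) ≤ d) :
    (G ⊓ fromRel fun a _ => a ∉ K).edgeSet.ncard ≤ Fintype.card V * d := by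
  have hsub : (G ⊓ fromRel fun a _ => a ∉ K).edgeSet ⊆
      ⋃ a, (fun b => s(a, b)) '' ↑(G.neighborFinset a \ K) := by
    rintro ⟨a, b⟩ ⟨hab, -, ha | hb⟩
    · exact Set.mem_iUnion.mpr ⟨b, a, by simpa using ⟨hab.symm, ha⟩, Sym2.eq_swap⟩
    · exact Set.mem_iUnion.mpr ⟨a, b, by simpa using ⟨hab, hb⟩, rfl⟩
  calc _ ≤ (⋃ a, (fun b => s(a, b)) '' ↑(G.neighborFinset a \ K)).ncard :=
        Set.ncard_le_ncard hsub (Set.finite_iUnion fun _ => Set.toFinite _)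
    _ ≤ ∑ a, ((fun b => s(a, b)) '' ↑(G.neighborFinset a \ K)).ncard :=
        Set.ncard_iUnion_le_of_fintype _
    _ ≤ ∑ _a : V, d := sum_le_sum fun a _ =>
        (Set.ncard_image_le (Set.toFinite _)).trans ((Set.ncard_coe_finset _).trans_le (hd a))
    _ = Fintype.card V * d := by rw [sum_const, card_univ, smul_eq_mul]

lemma exists_cluster_centers [Fintype V] [DecidableEq V] [DecidableRel G.Adj] (d : ℕ) :
    ∃ C K : Finset V, #C * (d + 1) ≤ #K ∧ (∀ k ∈ K, ∃ c ∈ C, G.Adj c k) ∧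
      ∀ a, #(G.neighborFinset a \ K) ≤ d := by
  -- Rather than running the greedy procedure, take a clustering with `#K` maximal: a vertex with
  -- more than `d` unclustered neighbours would extend it.
  let IsClustering : Finset V × Finset V → Prop := fun CK =>
    #CK.1 * (d + 1) ≤ #CK.2 ∧ ∀ k ∈ CK.2, ∃ c ∈ CK.1, G.Adj c k
  obtain ⟨⟨C, K⟩, hCK, hmax⟩ := exists_max_image ({CK | IsClustering CK} : Finset _)
    (fun CK => #CK.2) ⟨(∅, ∅), by simp [IsClustering]⟩
  obtain ⟨hCcard, hCadj⟩ := (mem_filter.mp hCK).2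
  refine ⟨C, K, hCcard, hCadj, fun a => ?_⟩
  by_contra! hlarge
  set N := G.neighborFinset a \ K
  have hunion : #(K ∪ N) = #K + #N := card_union_of_disjoint disjoint_sdiff
  have hextend : IsClustering (insert a C, K ∪ N) := by
    refine ⟨?_, fun k hk => ?_⟩
    · calc #(insert a C) * (d + 1) ≤ (#C + 1) * (d + 1) :=
            Nat.mul_le_mul_right _ (card_insert_le a C)
        _ ≤ #(K ∪ N) := by rw [hunion]; nlinarith
    · rcases mem_union.mp hk with hk | hk
      · obtain ⟨c, hc, hck⟩ := hCadj k hk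
        exact ⟨c, mem_insert_of_mem hc, hck⟩
      · exact ⟨a, mem_insert_self a C, (mem_neighborFinset _ _ _).mp (mem_sdiff.mp hk).1⟩
  have hKN : #(K ∪ N) ≤ #K := hmax _ (mem_filter.mpr ⟨mem_univ _, hextend⟩)
  omega

theorem reachable_and_dist_le_add_two_of_centers {K C : Set V}
    (hK : ∀ k ∈ K, ∃ c ∈ C, G.Adj c k) (hlight : ∀ a b, G.Adj a b → a ∉ K → H.Adj a b)
    (hcenter : ∀ c ∈ C, ∀ w, G.Reachable c w → ∃ q : H.Walk c w, q.length ≤ G.dist c w)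
    {u v : V} (huv : G.Reachable u v) : H.Reachable u v ∧ H.dist u v ≤ G.dist u v + 2 := by
  classical
  obtain ⟨p, hp⟩ := huv.exists_walk_length_eq_dist
  by_cases! hpK : ∀ a ∈ p.support, a ∉ K
  · have hedges : ∀ e ∈ p.edges, e ∈ H.edgeSet := by
      intro e he
      induction e using Sym2.ind with
      | _ a b =>
        exact hlight a b (p.adj_of_mem_edges he) (hpK a (p.fst_mem_support_of_mem_edges he))
    refine ⟨⟨p.transfer H hedges⟩, (dist_le (p.transfer H hedges)).trans ?_⟩
    rw [Walk.length_transfer, hp]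
    omega
  · obtain ⟨a, ha, haK⟩ := hpK
    obtain ⟨c, hc, hca⟩ := hK a haK
    have hsplit := congrArg Walk.length (p.take_spec ha)
    rw [Walk.length_append] at hsplit
    have hcu := dist_le (Walk.cons hca (p.takeUntil a ha).reverse)
    have hcv := dist_le (Walk.cons hca (p.dropUntil a ha))
    rw [Walk.length_cons, Walk.length_reverse] at hcu
    rw [Walk.length_cons] at hcv
    obtain ⟨q₁, hq₁⟩ := hcenter c hc u (hca.reachable.trans ⟨(p.takeUntil a ha).reverse⟩)
    obtain ⟨q₂, hq₂⟩ := hcenter c hc v (hca.reachable.trans ⟨p.dropUntil a ha⟩)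
    refine ⟨⟨q₁.reverse.append q₂⟩, (dist_le (q₁.reverse.append q₂)).trans ?_⟩
    rw [Walk.length_append, Walk.length_reverse]
    omega

theorem exists_additive_two_spanner [Fintype V] (G : SimpleGraph V) (d : ℕ) :
    ∃ H ≤ G, H.edgeSet.ncard ≤ Fintype.card V * d + Fintype.card V / (d + 1) * Fintype.card V ∧
      ∀ u v, G.Reachable u v → H.Reachable u v ∧ H.dist u v ≤ G.dist u v + 2 := by
  classical
  obtain ⟨C, K, hCK, hKC, hlow⟩ := exists_cluster_centers (G := G) d
  choose T hTG hTcard hT using exists_sparse_subgraph_dist_from_le G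
  let L := G ⊓ fromRel fun a _ => a ∉ K
  have hTH : ∀ c ∈ C, T c ≤ L ⊔ ⨆ c ∈ C, T c := fun c hc =>
    le_sup_of_le_right (le_iSup₂ (f := fun c _ => T c) c hc)
  refine ⟨L ⊔ ⨆ c ∈ C, T c, sup_le inf_le_left (iSup₂_le fun c _ => hTG c), ?_, fun u v huv => ?_⟩
  · have hC : #C ≤ Fintype.card V / (d + 1) :=
      (Nat.le_div_iff_mul_le d.succ_pos).mpr (hCK.trans (card_le_univ K))
    simp only [edgeSet_sup, edgeSet_iSup]
    calc _ ≤ L.edgeSet.ncard + (⋃ c ∈ C, (T c).edgeSet).ncard := Set.ncard_union_le _ _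
      _ ≤ Fintype.card V * d + ∑ c ∈ C, (T c).edgeSet.ncard :=
          add_le_add (ncard_edgeSet_inf_fromRel_notMem_le K hlow) (C.set_ncard_biUnion_le _)
      _ ≤ Fintype.card V * d + #C * Fintype.card V := by
          grw [sum_le_card_nsmul C _ _ fun c _ => hTcard c, smul_eq_mul]
      _ ≤ _ := by grw [hC]
  · refine reachable_and_dist_le_add_two_of_centers (K := K) (C := C) hKC
      (fun a b hab ha => Or.inl ⟨hab, hab.ne, .inl ha⟩) (fun c hc w hw => ?_) huv
    obtain ⟨q, hq⟩ := hT c w hw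
    exact ⟨q.mapLe (hTH c hc), by rwa [Walk.length_mapLe]⟩

end SimpleGraph

lemma Real.natCast_mul_nat_sqrt_le_rpow (n : ℕ) :
    (n : ℝ) * Nat.sqrt n ≤ (n : ℝ) ^ ((3 : ℝ) / 2) := by
  rw [show (3 : ℝ) / 2 = 1 + 1 / 2 by norm_num, Real.rpow_add' n.cast_nonneg (by norm_num),
    Real.rpow_one, ← Real.sqrt_eq_rpow]
  exact mul_le_mul_of_nonneg_left Real.nat_sqrt_le_real_sqrt n.cast_nonneg

/-- **(1,2) all-pairs spanner** (the `S = V` instance of the subsetwise spanner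
theorem). There is an absolute constant `c > 0` such that every finite simple
graph `G` on `n` vertices has a spanning subgraph `H ≤ G` with at most
`c · n^{3/2}` edges satisfying `δ_H(u,v) ≤ δ_G(u,v) + 2` for all `u, v` in the
same connected component of `G`. -/
theorem additive_two_spanner :
    ∃ c : ℝ, 0 < c ∧
      ∀ (V : Type) [Fintype V] (G : SimpleGraph V),
        ∃ H : SimpleGraph V, H ≤ G ∧
          (H.edgeSet.ncard : ℝ) ≤ c * (Fintype.card V : ℝ) ^ ((3 : ℝ) / 2) ∧
          ∀ u v : V, G.Reachable u v →
            H.Reachable u v ∧ H.dist u v ≤ G.dist u v + 2 := by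
  refine ⟨2, two_pos, fun V _ G => ?_⟩
  set n := Fintype.card V
  obtain ⟨H, hHG, hcard, hH⟩ := G.exists_additive_two_spanner (Nat.sqrt n)
  have hdiv : n / (Nat.sqrt n + 1) ≤ Nat.sqrt n :=
    Nat.lt_succ_iff.mp ((Nat.div_lt_iff_lt_mul n.sqrt.succ_pos).mpr (Nat.lt_succ_sqrt n))
  have hcard_le : H.edgeSet.ncard ≤ 2 * (n * Nat.sqrt n) := by
    calc _ ≤ n * Nat.sqrt n + Nat.sqrt n * n := hcard.trans (by gcongr)
      _ = _ := by ring
  refine ⟨H, hHG, ?_, hH⟩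
  calc (H.edgeSet.ncard : ℝ) ≤ 2 * ((n : ℝ) * Nat.sqrt n) := by exact_mod_cast hcard_le
    _ ≤ 2 * (n : ℝ) ^ ((3 : ℝ) / 2) := by grw [Real.natCast_mul_nat_sqrt_le_rpow]
end
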